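/- arXiv:1910.01251 — 7 statements merged into one kernel-verified Lean document; each statement's English description precedes it below -/
import Mathlib

section
/- Let n ≥ 1 and let μ : (Fin n × Fin n × Fin n) →₀ ℕ be an exponent vector of total degree n (i.e., ∑ μ = n). If the monomial X^μ is torus-invariant, then there exist permutations σ, τ of Fin n such that μ = ∑ i, single (i, σ i, τ i) 1; that is, every torus-invariant monomial of degree n is a maximum 3-dimensional matching monomial. -/
open MvPolynomial

/-- The scaling substitution `S_{a,b,c}`: the `ℂ`-algebra endomorphism of
`MvPolynomial (Fin n × Fin n × Fin n) ℂ` determined by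
`X (i,j,k) ↦ (a i * b j * c k) • X (i,j,k)`. -/
noncomputable def scaleSub {n : ℕ} (a b c : Fin n → ℂˣ) :
    MvPolynomial (Fin n × Fin n × Fin n) ℂ →ₐ[ℂ] MvPolynomial (Fin n × Fin n × Fin n) ℂ :=
  aeval fun v : Fin n × Fin n × Fin n =>
    (((a v.1 : ℂ) * (b v.2.1 : ℂ) * (c v.2.2 : ℂ))) • X v

/-- A polynomial is torus-invariant if it is fixed by all scaling substitutions `S_{a,b,c}`
with `∏ a = ∏ b = ∏ c = 1`; this encodes the natural action of
`ST_n(ℂ) × ST_n(ℂ) × ST_n(ℂ)` on `ℂ^n ⊗ ℂ^n ⊗ ℂ^n`. -/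
def TorusInvariant {n : ℕ} (p : MvPolynomial (Fin n × Fin n × Fin n) ℂ) : Prop :=
  ∀ a b c : Fin n → ℂˣ,
    (∏ i, a i) = 1 → (∏ j, b j) = 1 → (∏ k, c k) = 1 → scaleSub a b c p = p

/-!
Write the monomial `X^μ` as the multiset `m` of its `n` cells. The substitution `S_{a,b,c}`
multiplies `X^μ` by `∏_{(i,j,k) ∈ m} a i * b j * c k`, so invariance with `b = c = 1` says that
`∏_{i ∈ m₁} a i = 1` whenever `∏ a = 1`, where `m₁` is the first projection of `m`. Testing
`a = 2` at `i`, `2⁻¹` at `i'` and `1` elsewhere shows that every `i` occurs equally often in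
`m₁`; as `m₁` has `n` elements, it is `Fin n` itself, and likewise for the other two projections.
A multiset of triples whose three projections are all `Fin n` is the graph of a pair of
permutations.
-/

open Finset

theorem aeval_smul_X_monomial {σ R : Type*} [CommSemiring R] (w : σ → R) (μ : σ →₀ ℕ) (r : R) :
    aeval (fun v => w v • X v) (monomial μ r) = monomial μ (r * (μ.toMultiset.map w).prod) := by
  rw [Finsupp.toMultiset_map, Finsupp.prod_toMultiset,
    Finsupp.prod_mapDomain_index (fun _ => pow_zero _) (fun _ _ _ => pow_add _ _ _),
    aeval_monomial, monomial_eq]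
  simp only [smul_eq_C_mul, mul_pow, Finsupp.prod_mul, ← map_pow, ← map_finsuppProd, map_mul,
    algebraMap_eq]
  ring

theorem Finsupp.toMultiset_sum_single_one {ι α : Type*} (s : Finset ι) (g : ι → α) :
    toMultiset (∑ i ∈ s, single (g i) 1) = s.val.map g := by
  simp only [map_sum, toMultiset_single, one_nsmul]
  rw [← Multiset.sum_map_singleton (s.val.map g), Multiset.map_map]
  rfl

theorem Complex.not_isOfFinOrder_mk0_two : ¬IsOfFinOrder (Units.mk0 (2 : ℂ) two_ne_zero) := by
  rw [← Units.isOfFinOrder_val, isOfFinOrder_iff_pow_eq_one]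
  rintro ⟨k, hk, h⟩
  have := Complex.norm_eq_one_of_pow_eq_one h hk.ne'
  norm_num at this

namespace Multiset

section Balanced

variable {κ G : Type*} [Fintype κ] [DecidableEq κ] [CommGroup G] {g : G} {s : Multiset κ}

theorem count_eq_of_forall_prod_map_eq_one (hg : ¬IsOfFinOrder g)
    (h : ∀ a : κ → G, ∏ i, a i = 1 → (s.map a).prod = 1) (i j : κ) :
    s.count i = s.count j := by
  rcases eq_or_ne i j with rfl | hij
  · rfl
  have hprod := h (Pi.mulSingle i g * Pi.mulSingle j g⁻¹) (by
    simp [prod_mul_distrib, prod_pi_mulSingle'])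
  rw [Pi.mul_def, prod_map_mul,
    prod_map_eq_pow_single i (fun k hk _ => Pi.mulSingle_eq_of_ne hk _),
    prod_map_eq_pow_single j (fun k hk _ => Pi.mulSingle_eq_of_ne hk _), Pi.mulSingle_eq_same,
    Pi.mulSingle_eq_same, inv_pow, mul_inv_eq_one] at hprod
  exact injective_pow_iff_not_isOfFinOrder.mpr hg hprod

theorem eq_univ_of_forall_prod_map_eq_one (hg : ¬IsOfFinOrder g)
    (hcard : card s = Fintype.card κ) (h : ∀ a : κ → G, ∏ i, a i = 1 → (s.map a).prod = 1) :
    s = univ.val := by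
  ext i
  have hsum : card s = Fintype.card κ * s.count i := by
    rw [← sum_count_eq_card (s := univ) fun _ _ => mem_univ _,
      sum_congr rfl fun j _ => count_eq_of_forall_prod_map_eq_one hg h j i, sum_const, card_univ,
      smul_eq_mul]
  rw [count_univ]
  exact Nat.eq_of_mul_eq_mul_left (Fintype.card_pos_iff.mpr ⟨i⟩) (by rw [← hsum, hcard, mul_one])

end Balanced

section Matching

variable {α β γ δ : Type*} [Fintype α] [Fintype β] [Fintype γ]

theorem exists_eq_map_univ_of_map_fst_eq_univ {m : Multiset (α × δ)}
    (h : m.map Prod.fst = univ.val) : ∃ f : α → δ, m = univ.val.map fun i => (i, f i) := by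
  have hfst_inj := inj_on_of_nodup_map (h ▸ univ.nodup)
  have hmem : ∀ i, ∃ v ∈ m, v.1 = i := fun i => mem_map.mp (h ▸ mem_univ_val i)
  choose v hvm hv using hmem
  refine ⟨fun i => (v i).2, ?_⟩
  rw [← h, map_map]
  conv_lhs => rw [← map_id m]
  refine map_congr rfl fun x hx => ?_
  have : v x.1 = x := hfst_inj _ (hvm x.1) _ hx (hv x.1)
  simp [this]

theorem bijective_of_map_univ_eq_univ {f : α → β} (h : univ.val.map f = univ.val) :
    Function.Bijective f :=
  ⟨fun a b hab => inj_on_of_nodup_map (h ▸ univ.nodup) a (mem_univ_val a) b (mem_univ_val b) hab,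
    fun b => by simpa using (h ▸ mem_univ_val b : b ∈ univ.val.map f)⟩

theorem exists_equiv_of_map_eq_univ {m : Multiset (α × β × γ)}
    (h₁ : m.map Prod.fst = univ.val) (h₂ : m.map (fun v => v.2.1) = univ.val)
    (h₃ : m.map (fun v => v.2.2) = univ.val) :
    ∃ (σ : α ≃ β) (τ : α ≃ γ), m = univ.val.map fun i => (i, σ i, τ i) := by
  obtain ⟨f, rfl⟩ := exists_eq_map_univ_of_map_fst_eq_univ h₁
  rw [map_map] at h₂ h₃
  exact ⟨.ofBijective _ (bijective_of_map_univ_eq_univ h₂),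
    .ofBijective _ (bijective_of_map_univ_eq_univ h₃), rfl⟩

end Matching

end Multiset

theorem TorusInvariant.prod_map_toMultiset_eq_one {n : ℕ} {μ : (Fin n × Fin n × Fin n) →₀ ℕ}
    (hinv : TorusInvariant (monomial μ (1 : ℂ))) (a b c : Fin n → ℂˣ) (ha : ∏ i, a i = 1)
    (hb : ∏ j, b j = 1) (hc : ∏ k, c k = 1) :
    (μ.toMultiset.map fun v => a v.1 * b v.2.1 * c v.2.2).prod = 1 := by
  have h := congrArg (coeff μ) (hinv a b c ha hb hc)
  rw [scaleSub, aeval_smul_X_monomial, one_mul, coeff_monomial, coeff_monomial, if_pos rfl,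
    if_pos rfl] at h
  rw [← Units.val_eq_one, ← Units.coeHom_apply, map_multiset_prod, Multiset.map_map]
  simpa only [Function.comp_def, Units.coeHom_apply, Units.val_mul] using h

theorem invariant_monomial_of_degree_n_is_matching_general (n : ℕ)
    (μ : (Fin n × Fin n × Fin n) →₀ ℕ) (hdeg : (μ.sum fun _ e => e) = n)
    (hinv : TorusInvariant (monomial μ (1 : ℂ))) :
    ∃ σ τ : Equiv.Perm (Fin n),
      μ = ∑ i : Fin n, Finsupp.single (i, σ i, τ i) 1 := by
  have hmarginal (p : Fin n × Fin n × Fin n → Fin n)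
      (hp : ∀ a : Fin n → ℂˣ, ∏ i, a i = 1 → (μ.toMultiset.map fun v => a (p v)).prod = 1) :
      μ.toMultiset.map p = univ.val :=
    Multiset.eq_univ_of_forall_prod_map_eq_one Complex.not_isOfFinOrder_mk0_two
      (by rw [Multiset.card_map, Finsupp.card_toMultiset, Fintype.card_fin]; exact hdeg)
      fun a ha => by rw [Multiset.map_map]; exact hp a ha
  obtain ⟨σ, τ, hm⟩ := Multiset.exists_equiv_of_map_eq_univ
    (hmarginal _ fun a ha => by
      simpa using hinv.prod_map_toMultiset_eq_one a 1 1 ha (by simp) (by simp))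
    (hmarginal _ fun b hb => by
      simpa using hinv.prod_map_toMultiset_eq_one 1 b 1 (by simp) hb (by simp))
    (hmarginal _ fun c hc => by
      simpa using hinv.prod_map_toMultiset_eq_one 1 1 c (by simp) (by simp) hc)
  refine ⟨σ, τ, Multiset.toFinsupp.symm.injective ?_⟩
  rw [Multiset.toFinsupp_symm_apply, Multiset.toFinsupp_symm_apply, hm,
    Finsupp.toMultiset_sum_single_one]

/-- Every torus-invariant monomial of degree `n` is a maximum 3-dimensional matching
monomial. -/
theorem invariant_monomial_of_degree_n_is_matching (n : ℕ) (hn : 1 ≤ n)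
    (μ : (Fin n × Fin n × Fin n) →₀ ℕ) (hdeg : (μ.sum fun _ e => e) = n)
    (hinv : TorusInvariant (monomial μ (1 : ℂ))) :
    ∃ σ τ : Equiv.Perm (Fin n),
      μ = ∑ i : Fin n, Finsupp.single (i, σ i, τ i) 1 :=
  invariant_monomial_of_degree_n_is_matching_general n μ hdeg hinv
end

section
/- Let n ≥ 1 and let μ : (Fin n × Fin n × Fin n) →₀ ℕ be an exponent vector whose total degree d satisfies 0 < d < n. Then the monomial X^μ is not torus-invariant: there exist a, b, c : Fin n → ℂˣ with ∏ i, a i = ∏ j, b j = ∏ k, c k = 1 such that S_{a,b,c} (X^μ) ≠ X^μ. -/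
open MvPolynomial

/-
Scaling by `(a, 1, 1)` multiplies `X^μ` by `∏ᵢ aᵢ^{νᵢ}`, where `νᵢ` is the total exponent of the
variables with first index `i`. Since `|ν| = deg μ < n`, some index `i₁` has `ν i₁ = 0`, while
`deg μ > 0` gives an `i₀` with `ν i₀ > 0`; taking `a i₀ = 2`, `a i₁ = 1/2` and `a i = 1` otherwise
gives `∏ a = 1` and scaling factor `2^{ν i₀} ≠ 1`.
-/

open Finsupp

lemma scaleSub_monomial {n : ℕ} (a b c : Fin n → ℂˣ) (μ : (Fin n × Fin n × Fin n) →₀ ℕ) (r : ℂ) :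
    scaleSub a b c (monomial μ r) =
      monomial μ (↑(μ.prod fun v e => (a v.1 * b v.2.1 * c v.2.2) ^ e) * r) := by
  rw [scaleSub, aeval_monomial, monomial_eq]
  simp only [Finsupp.prod, Units.coe_prod, Units.val_pow_eq_pow_val, Units.val_mul,
    smul_eq_C_mul, C_mul, algebraMap_eq, map_prod, map_pow, mul_pow, Finset.prod_mul_distrib]
  ring

lemma scaleSub_one_one_monomial {n : ℕ} (a : Fin n → ℂˣ) (μ : (Fin n × Fin n × Fin n) →₀ ℕ)
    (r : ℂ) :
    scaleSub a 1 1 (monomial μ r) =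
      monomial μ (↑((μ.mapDomain Prod.fst).prod fun i e => a i ^ e) * r) := by
  rw [scaleSub_monomial, prod_mapDomain_index (fun _ => pow_zero _) (fun _ _ _ => pow_add _ _ _)]
  simp only [Pi.one_apply, mul_one]

lemma exists_apply_eq_zero_of_degree_lt_card {ι : Type*} [Fintype ι] {ν : ι →₀ ℕ}
    (h : ν.degree < Fintype.card ι) : ∃ i, ν i = 0 := by
  by_contra! hν
  rw [degree_eq_sum] at h
  have : Fintype.card ι ≤ ∑ i, ν i := calc
    Fintype.card ι = ∑ _i : ι, 1 := by simp
    _ ≤ ∑ i, ν i := Finset.sum_le_sum fun i _ => Nat.one_le_iff_ne_zero.2 (hν i)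
  omega

lemma exists_prod_eq_one_and_prod_pow_ne_one {ι G : Type*} [Fintype ι] [DecidableEq ι]
    [CommGroup G] {g : G} (hg : ¬IsOfFinOrder g) {ν : ι →₀ ℕ} {i₀ i₁ : ι}
    (h₀ : ν i₀ ≠ 0) (h₁ : ν i₁ = 0) :
    ∃ a : ι → G, ∏ i, a i = 1 ∧ (ν.prod fun i e => a i ^ e) ≠ 1 := by
  refine ⟨Pi.mulSingle i₀ g * Pi.mulSingle i₁ g⁻¹, ?_, ?_⟩
  · simp [Finset.prod_mul_distrib]
  · rw [prod_fintype _ _ (fun _ => pow_zero _)]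
    have hprod (j : ι) (x : G) : ∏ i, Pi.mulSingle j x i ^ ν i = x ^ ν j :=
      (Fintype.prod_eq_single j fun i hi => by simp [hi]).trans (by simp)
    simp only [Pi.mul_apply, mul_pow, Finset.prod_mul_distrib, hprod, h₁, pow_zero, mul_one]
    exact fun h => hg (isOfFinOrder_iff_pow_eq_one.2 ⟨_, Nat.pos_of_ne_zero h₀, h⟩)

theorem monomial_of_low_degree_not_invariant_general (n : ℕ)
    (μ : (Fin n × Fin n × Fin n) →₀ ℕ)
    (hd0 : 0 < μ.sum fun _ e => e) (hdn : (μ.sum fun _ e => e) < n) :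
    ∃ a b c : Fin n → ℂˣ,
      (∏ i, a i) = 1 ∧ (∏ j, b j) = 1 ∧ (∏ k, c k) = 1 ∧
        scaleSub a b c (monomial μ (1 : ℂ)) ≠ monomial μ (1 : ℂ) := by
  set ν := μ.mapDomain Prod.fst
  have hν : ν.degree = μ.sum fun _ e => e := degree_mapDomain _ _
  have hν0 : ν ≠ 0 := by
    intro h
    rw [h, map_zero] at hν
    omega
  obtain ⟨i₀, hi₀⟩ := Finsupp.ne_iff.1 hν0
  obtain ⟨i₁, hi₁⟩ := exists_apply_eq_zero_of_degree_lt_card (ν := ν) (by simpa [hν] using hdn)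
  have htwo : ¬IsOfFinOrder (Units.mk0 (2 : ℂ) two_ne_zero) := fun h => by
    simpa using (Units.isOfFinOrder_val.2 h).norm_eq_one
  obtain ⟨a, ha, hχ⟩ := exists_prod_eq_one_and_prod_pow_ne_one htwo hi₀ hi₁
  refine ⟨a, 1, 1, ha, Finset.prod_const_one, Finset.prod_const_one, fun h => hχ ?_⟩
  rw [scaleSub_one_one_monomial] at h
  simpa only [coeff_monomial, if_true, mul_one, Units.val_eq_one] using congrArg (coeff μ) h

/-- A monomial `X^μ` of total degree `d` with `0 < d < n` is not torus-invariant. -/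
theorem monomial_of_low_degree_not_invariant (n : ℕ) (hn : 1 ≤ n)
    (μ : (Fin n × Fin n × Fin n) →₀ ℕ)
    (hd0 : 0 < μ.sum fun _ e => e) (hdn : (μ.sum fun _ e => e) < n) :
    ∃ a b c : Fin n → ℂˣ,
      (∏ i, a i) = 1 ∧ (∏ j, b j) = 1 ∧ (∏ k, c k) = 1 ∧
        scaleSub a b c (monomial μ (1 : ℂ)) ≠ monomial μ (1 : ℂ) :=
  monomial_of_low_degree_not_invariant_general n μ hd0 hdn
end

section
/- For every n ≥ 1, the ℂ-submodule of ⊗^n ℂ^n consisting of all vectors v such that the n-fold tensor power of the linear map of g fixes v for every g ∈ SL_n(ℂ) (Matrix.SpecialLinearGroup (Fin n) ℂ) is exactly the ℂ-linear span of the alternating tensor alt_n; in particular this space of SL_n(ℂ)-invariant vectors is one-dimensional. -/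
open PiTensorProduct

/-- The alternating tensor `alt_N = ∑_{π ∈ S_N} sign(π) • (⨂ₜ i, e_{π i})` in the `N`-fold
tensor power of `ℂ^N`, where `e_j = Pi.single j 1` is the standard basis. -/
noncomputable def altTensor (N : ℕ) : PiTensorProduct ℂ (fun _ : Fin N => (Fin N → ℂ)) :=
  ∑ π : Equiv.Perm (Fin N), (Equiv.Perm.sign π : ℤ) •
    PiTensorProduct.tprod ℂ (fun i => Pi.single (π i) (1 : ℂ))

/-!
Expand an invariant tensor in the basis `e_p = ⨂ᵢ e_(p i)`, `p : Fin n → Fin n`. Monomial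
matrices of determinant one (a permutation followed by a diagonal scaling) send basis tensors to
multiples of basis tensors, so invariance yields relations among the coordinates. The diagonal
matrix with entries `2` at `a` and `1/2` at `b` scales `e_p` by `2 ^ #p⁻¹(a)`, which kills the
coordinate of every `p` that hits `a` but misses `b`: only permutations survive. A transposition
composed with a sign change shows that the coordinate at `σ` is `sign σ` times the coordinate at
the identity. So an invariant tensor is determined by its identity coordinate, while `alt_n` is
invariant (every alternating map is scaled by `det g` under `g`) with identity coordinate `1`.
-/

open scoped TensorProduct

namespace AlternatingMap

variable {R M N ι : Type*} [CommRing R] [AddCommGroup M] [Module R M] [AddCommGroup N]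
  [Module R N] [Fintype ι] [DecidableEq ι]

theorem apply_eq_basis_det_smul (e : Module.Basis ι R M) (F : M [⋀^ι]→ₗ[R] N) (v : ι → M) :
    F v = e.det v • F e := by
  suffices F = (LinearMap.toSpanSingleton R N (F e)).compAlternatingMap e.det by
    conv_lhs => rw [this]
    rfl
  refine e.ext_alternating fun i hi => ?_
  let σ : Equiv.Perm ι := Equiv.ofBijective i (Finite.injective_iff_bijective.1 hi)
  change F (e ∘ σ) = e.det (e ∘ σ) • F e
  simp [map_perm, Module.Basis.det_self]

theorem apply_linearMap_comp (e : Module.Basis ι R M) (F : M [⋀^ι]→ₗ[R] N) (f : M →ₗ[R] M)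
    (v : ι → M) : F (f ∘ v) = LinearMap.det f • F v := by
  rw [apply_eq_basis_det_smul e F (f ∘ v), e.det_comp, mul_smul, ← apply_eq_basis_det_smul]

end AlternatingMap

theorem PiTensorProduct.map_alternatization_tprod {R M ι : Type*} [CommRing R]
    [AddCommGroup M] [Module R M] [Fintype ι] [DecidableEq ι] (f : M →ₗ[R] M) (v : ι → M) :
    map (fun _ => f) (MultilinearMap.alternatization (tprod R) v) =
      MultilinearMap.alternatization (tprod R) (f ∘ v) := by
  simp [MultilinearMap.alternatization_apply, map_sum, Units.smul_def, map_tprod]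

variable (R ι κ : Type*) [CommRing R] [Fintype κ] [DecidableEq κ]

noncomputable def slTensorPower :
    Representation R (Matrix.SpecialLinearGroup κ R) (⨂[R] _ : ι, (κ → R)) :=
  mapMonoidHom.comp <| MonoidHom.pi fun _ =>
    (Matrix.toLinAlgEquiv' : Matrix κ κ R ≃ₐ[R] _).toMonoidHom.comp
      Matrix.SpecialLinearGroup.coeMonoidHom

noncomputable def tensorPowerBasis [Fintype ι] : Module.Basis (ι → κ) R (⨂[R] _ : ι, (κ → R)) :=
  Basis.piTensorProduct fun _ => Pi.basisFun R κ

variable {R ι κ}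

def monomialMatrix (τ : Equiv.Perm κ) (s : κ → R) : Matrix κ κ R :=
  (Matrix.diagonal s).submatrix τ.symm id

theorem slTensorPower_apply (g : Matrix.SpecialLinearGroup κ R) :
    slTensorPower R ι κ g = map fun _ => Matrix.toLin' (g : Matrix κ κ R) := rfl

theorem tensorPowerBasis_apply [Fintype ι] (p : ι → κ) :
    tensorPowerBasis R ι κ p = ⨂ₜ[R] i, Pi.single (p i) 1 := by
  simp [tensorPowerBasis, Basis.piTensorProduct_apply]

theorem det_monomialMatrix (τ : Equiv.Perm κ) (s : κ → R) :
    (monomialMatrix τ s).det = Equiv.Perm.sign τ * ∏ j, s j := by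
  simp [monomialMatrix, Matrix.det_permute]

theorem toLin'_monomialMatrix_single (τ : Equiv.Perm κ) (s : κ → R) (j : κ) :
    Matrix.toLin' (monomialMatrix τ s) (Pi.single j 1) = s j • Pi.single (τ j) 1 := by
  ext i
  by_cases hi : i = τ j
  · simp [monomialMatrix, hi]
  · simp [monomialMatrix, Equiv.symm_apply_eq, hi]

theorem map_monomialMatrix_tensorPowerBasis [Fintype ι] (τ : Equiv.Perm κ) (s : κ → R)
    (p : ι → κ) :
    map (fun _ => Matrix.toLin' (monomialMatrix τ s)) (tensorPowerBasis R ι κ p) =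
      (∏ i, s (p i)) • tensorPowerBasis R ι κ (τ ∘ p) := by
  simp only [tensorPowerBasis_apply, map_tprod, toLin'_monomialMatrix_single,
    MultilinearMap.map_smul_univ, Function.comp_apply]

theorem repr_map_monomialMatrix [Fintype ι] (τ : Equiv.Perm κ) (s : κ → R)
    (v : ⨂[R] _ : ι, (κ → R)) (p : ι → κ) :
    (tensorPowerBasis R ι κ).repr (map (fun _ => Matrix.toLin' (monomialMatrix τ s)) v)
      (τ ∘ p) = (∏ i, s (p i)) * (tensorPowerBasis R ι κ).repr v p := by
  have key : Finsupp.lapply (τ ∘ p) ∘ₗ (tensorPowerBasis R ι κ).repr.toLinearMap ∘ₗ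
      map (fun _ => Matrix.toLin' (monomialMatrix τ s)) =
      (∏ i, s (p i)) • (Finsupp.lapply p ∘ₗ (tensorPowerBasis R ι κ).repr.toLinearMap) := by
    refine (tensorPowerBasis R ι κ).ext fun q => ?_
    by_cases hq : q = p
    · subst hq; simp [map_monomialMatrix_tensorPowerBasis]
    · have : τ ∘ q ≠ τ ∘ p := fun h => hq (τ.injective.comp_left h)
      simp [map_monomialMatrix_tensorPowerBasis, this, hq]
  exact LinearMap.congr_fun key v

theorem repr_comp_of_mem_invariants [Fintype ι] {v : ⨂[R] _ : ι, (κ → R)}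
    (hv : v ∈ (slTensorPower R ι κ).invariants) {τ : Equiv.Perm κ} {s : κ → R}
    (hdet : Equiv.Perm.sign τ * ∏ j, s j = 1) (p : ι → κ) :
    (tensorPowerBasis R ι κ).repr v (τ ∘ p) =
      (∏ i, s (p i)) * (tensorPowerBasis R ι κ).repr v p := by
  have hg : map (fun _ => Matrix.toLin' (monomialMatrix τ s)) v = v :=
    hv ⟨monomialMatrix τ s, (det_monomialMatrix τ s).trans hdet⟩
  rw [← repr_map_monomialMatrix, hg]

theorem repr_perm_of_mem_invariants {v : ⨂[R] _ : κ, (κ → R)}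
    (hv : v ∈ (slTensorPower R κ κ).invariants) (σ : Equiv.Perm κ) :
    (tensorPowerBasis R κ κ).repr v σ =
      Equiv.Perm.sign σ * (tensorPowerBasis R κ κ).repr v id := by
  induction σ using Equiv.Perm.swap_induction_on with
  | one => simp
  | swap_mul σ x y hxy ih =>
    have hdet : Equiv.Perm.sign (Equiv.swap x y) * ∏ j, Pi.mulSingle x (-1 : R) j = 1 := by
      simp [Equiv.Perm.sign_swap hxy]
    rw [Equiv.Perm.coe_mul, repr_comp_of_mem_invariants hv hdet, ih,
      Equiv.prod_comp σ (Pi.mulSingle x (-1 : R))]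
    simp [Equiv.Perm.sign_swap hxy]

section CharZero

variable {K : Type*} [Field K] [CharZero K]

theorem repr_eq_zero_of_mem_invariants [Fintype ι] {v : ⨂[K] _ : ι, (κ → K)}
    (hv : v ∈ (slTensorPower K ι κ).invariants) {p : ι → κ} {a b : κ}
    (ha : a ∈ Set.range p) (hb : b ∉ Set.range p) :
    (tensorPowerBasis K ι κ).repr v p = 0 := by
  set s : κ → K := Pi.mulSingle a 2 * Pi.mulSingle b 2⁻¹
  set k := (Finset.univ.filter fun i => p i = a).card
  have hdet : Equiv.Perm.sign (1 : Equiv.Perm κ) * ∏ j, s j = 1 := by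
    simp [s, Finset.prod_mul_distrib]
  have hweight : ∏ i, s (p i) = 2 ^ k := by
    have hpb : ∀ i, p i ≠ b := fun i h => hb ⟨i, h⟩
    simp [s, k, Pi.mulSingle_apply, hpb, Finset.prod_ite]
  have hk : k ≠ 0 := by
    obtain ⟨i, rfl⟩ := ha
    exact Finset.card_ne_zero.2 ⟨i, by simp⟩
  have h2k : (2 : K) ^ k ≠ 1 := by
    exact_mod_cast (Nat.one_lt_two_pow hk).ne'
  have h := repr_comp_of_mem_invariants hv hdet p
  rw [Equiv.Perm.coe_one, Function.id_comp, hweight] at h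
  have : (tensorPowerBasis K ι κ).repr v p * (2 ^ k - 1) = 0 := by
    linear_combination -h
  exact (mul_eq_zero.1 this).resolve_right (sub_ne_zero.2 h2k)

theorem eq_zero_of_mem_invariants_of_repr_id_eq_zero {v : ⨂[K] _ : κ, (κ → K)}
    (hv : v ∈ (slTensorPower K κ κ).invariants) (h : (tensorPowerBasis K κ κ).repr v id = 0) :
    v = 0 := by
  refine (tensorPowerBasis K κ κ).ext_elem fun p => ?_
  rw [map_zero, Finsupp.zero_apply]
  by_cases hp : Function.Surjective p
  · let σ := Equiv.ofBijective p (Finite.surjective_iff_bijective.1 hp)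
    rw [show p = ⇑σ from rfl, repr_perm_of_mem_invariants hv, h, mul_zero]
  · obtain ⟨b, hb⟩ := not_forall.1 hp
    exact repr_eq_zero_of_mem_invariants hv ⟨b, rfl⟩ hb

end CharZero

theorem altTensor_eq_alternatization (n : ℕ) :
    altTensor n = MultilinearMap.alternatization (tprod ℂ) (Pi.basisFun ℂ (Fin n)) := by
  simp [altTensor, MultilinearMap.alternatization_apply, Units.smul_def]

theorem altTensor_mem_invariants (n : ℕ) :
    altTensor n ∈ (slTensorPower ℂ (Fin n) (Fin n)).invariants := fun g => by
  rw [slTensorPower_apply, altTensor_eq_alternatization, map_alternatization_tprod,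
    AlternatingMap.apply_linearMap_comp (Pi.basisFun ℂ (Fin n)), LinearMap.det_toLin', g.2,
    one_smul]

theorem repr_altTensor_id (n : ℕ) :
    (tensorPowerBasis ℂ (Fin n) (Fin n)).repr (altTensor n) id = 1 := by
  simp only [altTensor, ← tensorPowerBasis_apply, map_sum, map_zsmul, Module.Basis.repr_self,
    Finsupp.finsetSum_apply, Finsupp.smul_apply, Finsupp.single_apply]
  rw [Finset.sum_eq_single 1]
  · simp
  · intro σ _ hσ
    simp [← Equiv.Perm.coe_one, DFunLike.coe_fn_eq, hσ]
  · simp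

theorem invariant_vectors_eq_span_altTensor_general (n : ℕ) :
    {v : PiTensorProduct ℂ (fun _ : Fin n => (Fin n → ℂ)) |
        ∀ g : Matrix.SpecialLinearGroup (Fin n) ℂ,
          PiTensorProduct.map
            (fun _ : Fin n => Matrix.toLin' (g : Matrix (Fin n) (Fin n) ℂ)) v = v}
      = ↑(Submodule.span ℂ ({altTensor n} :
          Set (PiTensorProduct ℂ (fun _ : Fin n => (Fin n → ℂ))))) := by
  change SetLike.coe (slTensorPower ℂ (Fin n) (Fin n)).invariants = _
  congr 1
  refine le_antisymm (fun v hv => ?_)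
    (Submodule.span_le.2 (Set.singleton_subset_iff.2 (altTensor_mem_invariants n)))
  set c := (tensorPowerBasis ℂ (Fin n) (Fin n)).repr v id
  have hdiff : v - c • altTensor n = 0 :=
    eq_zero_of_mem_invariants_of_repr_id_eq_zero
      (sub_mem hv (Submodule.smul_mem _ c (altTensor_mem_invariants n)))
      (by simp [c, repr_altTensor_id])
  exact Submodule.mem_span_singleton.2 ⟨c, (sub_eq_zero.1 hdiff).symm⟩

/-- The set of `SL_n(ℂ)`-invariant vectors in the `n`-fold tensor power of `ℂ^n` is exactly
the `ℂ`-linear span of the alternating tensor `alt_n`. -/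
theorem invariant_vectors_eq_span_altTensor (n : ℕ) (hn : 1 ≤ n) :
    {v : PiTensorProduct ℂ (fun _ : Fin n => (Fin n → ℂ)) |
        ∀ g : Matrix.SpecialLinearGroup (Fin n) ℂ,
          PiTensorProduct.map
            (fun _ : Fin n => Matrix.toLin' (g : Matrix (Fin n) (Fin n) ℂ)) v = v}
      = ↑(Submodule.span ℂ ({altTensor n} :
          Set (PiTensorProduct ℂ (fun _ : Fin n => (Fin n → ℂ))))) :=
  invariant_vectors_eq_span_altTensor_general n
end

section
/- Let n ≥ 1 and m ≥ 0 with n not dividing m. If v ∈ ⊗^m ℂ^n is fixed by the m-fold tensor power of the linear map of g for every g ∈ SL_n(ℂ), then v = 0; i.e., ⊗^m ℂ^n contains no nonzero SL_n(ℂ)-invariant vector unless n ∣ m. -/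
/-!
A primitive `n`-th root of unity `ζ` gives the central element `ζ • 1` of `SL_n(ℂ)`, which acts
on `⊗^m ℂ^n` as the scalar `ζ ^ m`. When `n ∤ m` this scalar is not `1`, so only `0` is fixed.
-/

open PiTensorProduct

theorem PiTensorProduct.map_smul_id {R ι : Type*} [CommSemiring R] [Fintype ι]
    {s : ι → Type*} [∀ i, AddCommMonoid (s i)] [∀ i, Module R (s i)] (c : R) :
    map (fun i ↦ c • (LinearMap.id : s i →ₗ[R] s i)) = c ^ Fintype.card ι • LinearMap.id := by
  ext f
  simp [MultilinearMap.map_smul_univ, Finset.prod_const]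

theorem Matrix.SpecialLinearGroup.exists_toLin'_eq_smul_id {n R : Type*} [Fintype n]
    [DecidableEq n] [CommRing R] {ζ : R} (hζ : ζ ^ Fintype.card n = 1) :
    ∃ g : SpecialLinearGroup n R, Matrix.toLin' (g : Matrix n n R) = ζ • LinearMap.id :=
  ⟨⟨ζ • 1, by simp [hζ]⟩, by simp⟩

theorem eq_zero_of_smul_eq_self {K V : Type*} [DivisionRing K] [AddCommGroup V] [Module K V]
    {c : K} (hc : c ≠ 1) {v : V} (h : c • v = v) : v = 0 :=
  (smul_eq_zero.mp (by rw [sub_smul, one_smul, h, sub_self] : (c - 1) • v = 0)).resolve_left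
    (sub_ne_zero.mpr hc)

/-- If `n` does not divide `m`, then the `m`-fold tensor power of `ℂ^n` contains no nonzero
`SL_n(ℂ)`-invariant vector. -/
theorem no_invariant_vectors_of_not_dvd (n m : ℕ) (hn : 1 ≤ n) (hnm : ¬ n ∣ m)
    (v : PiTensorProduct ℂ (fun _ : Fin m => (Fin n → ℂ)))
    (hv : ∀ g : Matrix.SpecialLinearGroup (Fin n) ℂ,
      PiTensorProduct.map
        (fun _ : Fin m => Matrix.toLin' (g : Matrix (Fin n) (Fin n) ℂ)) v = v) :
    v = 0 := by
  obtain ⟨ζ, hζ⟩ : ∃ ζ : ℂ, IsPrimitiveRoot ζ n := ⟨_, Complex.isPrimitiveRoot_exp n (by omega)⟩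
  obtain ⟨g, hg⟩ := Matrix.SpecialLinearGroup.exists_toLin'_eq_smul_id (n := Fin n)
    (by simpa using hζ.pow_eq_one)
  have hscalar : ζ ^ m • v = v := by
    simpa [hg, PiTensorProduct.map_smul_id] using hv g
  exact eq_zero_of_smul_eq_self (mt (hζ.pow_eq_one_iff_dvd m).mp hnm) hscalar
end

section
/- Let k ≥ 1, n ≥ 1 and set N = 2kn. Identify the index set Fin N with Fin n × Fin (2k) via a fixed equivalence (block m of size 2k consists of the pairs (m, t)). For every permutation π ∈ Equiv.Perm (Fin n), the block permutation σ_π ∈ Equiv.Perm (Fin n × Fin (2k)) given by σ_π (m, t) = (π m, t) has sign 1, and consequently the factor-permutation of the alternating tensor alt_N ∈ ⊗^{Fin n × Fin 2k} ℂ^N by σ_π fixes alt_N; i.e., alt_N, viewed as an n-fold tensor of blocks of 2k factors, is a symmetric tensor. -/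
open PiTensorProduct

/-- The alternating tensor in the tensor power of `ℂ^N` indexed by a finite type `ι`
identified with `Fin N` via an equivalence `e`:
`∑_{π ∈ S_N} sign(π) • (the elementary tensor whose factor at `i : ι` is `e_{π (e i)}`)`. -/
noncomputable def altTensorIdx {ι : Type} [Fintype ι] (N : ℕ) (e : ι ≃ Fin N) :
    PiTensorProduct ℂ (fun _ : ι => (Fin N → ℂ)) :=
  ∑ π : Equiv.Perm (Fin N), (Equiv.Perm.sign π : ℤ) •
    PiTensorProduct.tprod ℂ (fun i => Pi.single (π (e i)) (1 : ℂ))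

namespace Equiv.Perm

theorem sign_prodCongr_refl {α β : Type*} [DecidableEq α] [Fintype α] [DecidableEq β]
    [Fintype β] (σ : Perm α) :
    sign (prodCongr σ (Equiv.refl β)) = sign σ ^ Fintype.card β := by
  rw [prodCongr_refl_right, sign_prodCongrLeft, Finset.prod_const, Finset.card_univ]

theorem sign_prodCongr_refl_of_even {α β : Type*} [DecidableEq α] [Fintype α] [DecidableEq β]
    [Fintype β] (σ : Perm α) (hβ : Even (Fintype.card β)) :
    sign (prodCongr σ (Equiv.refl β)) = 1 := by
  obtain ⟨m, hm⟩ := hβ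
  rw [sign_prodCongr_refl, hm, ← two_mul, pow_mul, Int.units_sq, one_pow]

end Equiv.Perm

/-- Permuting the factors by `σ` amounts to precomposing every `π` in the defining sum with the
conjugate `e ∘ σ⁻¹ ∘ e⁻¹`, a reindexing of the sum that preserves signs when `sign σ = 1`. -/
theorem reindex_altTensorIdx_of_sign_eq_one {ι : Type} [Fintype ι] [DecidableEq ι] (N : ℕ)
    (e : ι ≃ Fin N) {σ : Equiv.Perm ι} (hσ : Equiv.Perm.sign σ = 1) :
    reindex ℂ (fun _ : ι => (Fin N → ℂ)) σ (altTensorIdx N e) = altTensorIdx N e := by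
  set τ : Equiv.Perm (Fin N) := (e.symm.trans σ.symm).trans e with hτ
  have sign_τ : Equiv.Perm.sign τ = 1 := by
    rw [hτ, Equiv.Perm.sign_symm_trans_trans, Equiv.Perm.sign_symm, hσ]
  have apply_mul_τ (π : Equiv.Perm (Fin N)) (i : ι) : (π * τ) (e i) = π (e (σ.symm i)) := by
    simp [hτ]
  unfold altTensorIdx
  rw [map_sum]
  refine Fintype.sum_equiv (Equiv.mulRight τ) _ _ fun π => ?_
  simp only [map_zsmul, reindex_tprod, Equiv.coe_mulRight, map_mul, sign_τ, mul_one,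
    apply_mul_τ]

/-- For the block identification `Fin n × Fin (2k) ≃ Fin (2kn)` (block `m` of size `2k`
consists of the pairs `(m, t)`), the block permutation `σ_π : (m, t) ↦ (π m, t)` induced by
any `π ∈ S_n` has sign `1`, and permuting the tensor factors of the alternating tensor
`alt_{2kn}` by `σ_π` fixes it: `alt_{2kn}` is a symmetric tensor in its `n` blocks. -/
theorem altTensor_block_symmetric (k n : ℕ)
    (π : Equiv.Perm (Fin n)) :
    Equiv.Perm.sign (Equiv.prodCongr π (Equiv.refl (Fin (2 * k)))) = 1 ∧
    PiTensorProduct.reindex ℂ (fun _ : Fin n × Fin (2 * k) => (Fin (2 * k * n) → ℂ))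
        (Equiv.prodCongr π (Equiv.refl (Fin (2 * k))))
        (altTensorIdx (2 * k * n)
          (finProdFinEquiv.trans (finCongr (by ring : n * (2 * k) = 2 * k * n))))
      = altTensorIdx (2 * k * n)
          (finProdFinEquiv.trans (finCongr (by ring : n * (2 * k) = 2 * k * n))) := by
  have hsign := Equiv.Perm.sign_prodCongr_refl_of_even (β := Fin (2 * k)) π (by simp)
  exact ⟨hsign, reindex_altTensorIdx_of_sign_eq_one _ _ hsign⟩
end

section
/- Let k ≥ 2 be even and d ≥ 1. For every matrix X : Matrix (Fin d) (Fin d) ℂ, ∑_{σ ∈ Equiv.Perm (Fin d)} ∑_{τ ∈ Equiv.Perm (Fin d)} ((Equiv.Perm.sign ρ_{σ,τ} : ℤ) : ℂ) * ∏_{m} X (σ m) (τ m) = (d.factorial : ℂ) * Matrix.permanent X, where ρ_{σ,τ} ∈ Equiv.Perm (Fin d × Fin (2k)) is defined by ρ_{σ,τ} (m, t) = (σ m, t) if (t : ℕ) < k and (τ m, t) otherwise. (This is the evaluation of the hyperpfaffian pairing ⟨e_1 ∧ ⋯ ∧ e_{2kd}, p^{⊗ d}⟩ at the Barvinok point p,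 showing the d × d permanent is a projection of the hyperpfaffian Pf_{k,d} when k is even.) -/
/-! Every `ρ_{σ,τ}` is a product of `k` copies of `σ` and `k` copies of `τ` acting on disjoint
slices, so its sign is `(sign σ · sign τ)^k = 1` for even `k`. The signed double sum is then
`d!` copies of `∑_τ ∏_m X (σ m) (τ m)`, which is the permanent for every `σ`. -/

/-- The permutation `ρ_{σ,τ}` of `Fin d × Fin (2k)` acting as `σ` on the first coordinate
in the slice `t < k` and as `τ` on the first coordinate in the slice `t ≥ k`. -/
def rhoPerm {d : ℕ} (k : ℕ) (σ τ : Equiv.Perm (Fin d)) :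
    Equiv.Perm (Fin d × Fin (2 * k)) where
  toFun p := (if (p.2 : ℕ) < k then σ p.1 else τ p.1, p.2)
  invFun p := (if (p.2 : ℕ) < k then σ.symm p.1 else τ.symm p.1, p.2)
  left_inv p := by by_cases h : (p.2 : ℕ) < k <;> simp [h]
  right_inv p := by by_cases h : (p.2 : ℕ) < k <;> simp [h]

open Finset Equiv

theorem Fin.prod_ite_val_lt_two_mul {M : Type*} [CommMonoid M] (k : ℕ) (a b : M) :
    ∏ t : Fin (2 * k), (if (t : ℕ) < k then a else b) = a ^ k * b ^ k := by
  have h_lt : #{t : Fin (2 * k) | (t : ℕ) < k} = k := by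
    rw [Fin.card_filter_val_lt]; omega
  have h_ge : #{t : Fin (2 * k) | ¬ (t : ℕ) < k} = k := by
    have := card_filter_add_card_filter_not (s := (univ : Finset (Fin (2 * k))))
      (fun t => (t : ℕ) < k)
    rw [h_lt, card_univ, Fintype.card_fin] at this
    omega
  rw [prod_ite, Finset.prod_const, Finset.prod_const, h_lt, h_ge]

theorem rhoPerm_eq_prodCongrLeft {d : ℕ} (k : ℕ) (σ τ : Perm (Fin d)) :
    rhoPerm k σ τ = prodCongrLeft fun t : Fin (2 * k) => if (t : ℕ) < k then σ else τ := by
  ext p <;> simp [rhoPerm, apply_ite (fun e : Perm (Fin d) => e p.1)]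

theorem sign_rhoPerm {d : ℕ} (k : ℕ) (σ τ : Perm (Fin d)) :
    Perm.sign (rhoPerm k σ τ) = (Perm.sign σ * Perm.sign τ) ^ k := by
  rw [rhoPerm_eq_prodCongrLeft, Perm.sign_prodCongrLeft, mul_pow]
  simp_rw [apply_ite Perm.sign]
  exact Fin.prod_ite_val_lt_two_mul k _ _

theorem sign_rhoPerm_of_even {d k : ℕ} (hk : Even k) (σ τ : Perm (Fin d)) :
    Perm.sign (rhoPerm k σ τ) = 1 := by
  rw [sign_rhoPerm, Int.units_pow_eq_pow_mod_two, Nat.even_iff.mp hk, pow_zero]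

theorem Matrix.sum_perm_prod_apply_perm_eq_permanent {n R : Type*} [DecidableEq n] [Fintype n]
    [CommSemiring R] (X : Matrix n n R) (σ : Perm n) :
    ∑ τ : Perm n, ∏ m, X (σ m) (τ m) = X.permanent := by
  rw [← permanent_permute_cols σ X, ← permanent_transpose]
  rfl

theorem signed_double_perm_sum_eq_factorial_mul_permanent_general (k d : ℕ)
    (hke : Even k) (X : Matrix (Fin d) (Fin d) ℂ) :
    (∑ σ : Equiv.Perm (Fin d), ∑ τ : Equiv.Perm (Fin d),
        ((Equiv.Perm.sign (rhoPerm k σ τ) : ℤ) : ℂ) * ∏ m : Fin d, X (σ m) (τ m))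
      = (d.factorial : ℂ) * X.permanent := by
  simp only [sign_rhoPerm_of_even hke, Units.val_one, Int.cast_one, one_mul,
    X.sum_perm_prod_apply_perm_eq_permanent, sum_const, card_univ, Fintype.card_perm,
    Fintype.card_fin, nsmul_eq_mul]

/-- For even `k ≥ 2`, the signed double sum over pairs of permutations, with signs given by
the block permutations `ρ_{σ,τ}` of `Fin d × Fin (2k)`, equals `d! · permanent X`: the
`d × d` permanent is a projection of the hyperpfaffian `Pf_{k,d}`. -/
theorem signed_double_perm_sum_eq_factorial_mul_permanent (k d : ℕ)
    (hk : 2 ≤ k) (hke : Even k) (hd : 1 ≤ d) (X : Matrix (Fin d) (Fin d) ℂ) :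
    (∑ σ : Equiv.Perm (Fin d), ∑ τ : Equiv.Perm (Fin d),
        ((Equiv.Perm.sign (rhoPerm k σ τ) : ℤ) : ℂ) * ∏ m : Fin d, X (σ m) (τ m))
      = (d.factorial : ℂ) * X.permanent :=
  signed_double_perm_sum_eq_factorial_mul_permanent_general k d hke X
end

section
/- Let k ≥ 1, n ≥ 1 and set N = 2kn. Let 0 < d < n. Then every SL_N(ℂ)-invariant polynomial p ∈ MvPolynomial ((Fin (2k)) → Fin N) ℂ that is homogeneous of degree d is the zero polynomial; i.e., the action of SL_{2kn}(ℂ) on ⊗^{2k} ℂ^{2kn} has no nonzero homogeneous invariant polynomials of degree strictly between 0 and n. -/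
open MvPolynomial

/-- The `ℂ`-algebra endomorphism `φ_g` of the coordinate ring of `⊗^{2k} ℂ^N`, modeled as
`MvPolynomial ((Fin (2k)) → Fin N) ℂ`, determined by
`X f ↦ ∑_h (∏_t g (f t) (h t)) • X h`; it encodes precomposition of polynomial functions
with the diagonal action of `g ∈ SL_N(ℂ)` on `⊗^{2k} ℂ^N`. -/
noncomputable def slSub {k N : ℕ} (g : Matrix.SpecialLinearGroup (Fin N) ℂ) :
    MvPolynomial (Fin (2 * k) → Fin N) ℂ →ₐ[ℂ] MvPolynomial (Fin (2 * k) → Fin N) ℂ :=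
  aeval fun f : Fin (2 * k) → Fin N =>
    ∑ h : Fin (2 * k) → Fin N,
      (∏ t : Fin (2 * k), (g : Matrix (Fin N) (Fin N) ℂ) (f t) (h t)) • X h

/-- A polynomial on `⊗^{2k} ℂ^N` is `SL_N(ℂ)`-invariant if it is fixed by `φ_g` for all
`g ∈ SL_N(ℂ)`. -/
def SLInvariant {k N : ℕ} (p : MvPolynomial (Fin (2 * k) → Fin N) ℂ) : Prop :=
  ∀ g : Matrix.SpecialLinearGroup (Fin N) ℂ, slSub g p = p

/-!
The monomials `X^m` are weight vectors for the diagonal torus of `SL_N(ℂ)`: `diag(v)` scales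
`X^m` by `∏ᵢ vᵢ ^ cᵢ`, where `cᵢ` counts the occurrences of the index `i` among the
multi-indices of the variables of `m`. Hence every monomial of an invariant has a trivial torus
character, and testing against `diag(2, 2⁻¹, 1, …)` forces all `cᵢ` to be equal. Since the
`cᵢ` sum to `2k · deg m`, this gives `N ∣ 2kd`; for `N = 2kn` that means `n ∣ d`, impossible
when `0 < d < n`.
-/

open Finset

namespace MvPolynomial

variable {R σ : Type*} [CommSemiring R]

theorem aeval_smul_X_monomial (c : σ → R) (u : σ →₀ ℕ) (a : R) :
    aeval (fun i => c i • X i : σ → MvPolynomial σ R) (monomial u a) =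
      monomial u ((u.prod fun i e => c i ^ e) * a) := by
  simp only [aeval_monomial, smul_eq_C_mul, mul_pow, ← C_pow, Finsupp.prod_mul]
  rw [← map_finsuppProd C, monomial_eq, C_mul, algebraMap_eq]
  ring

theorem coeff_aeval_smul_X [DecidableEq σ] (c : σ → R) (p : MvPolynomial σ R) (m : σ →₀ ℕ) :
    coeff m (aeval (fun i => c i • X i : σ → MvPolynomial σ R) p) =
      (m.prod fun i e => c i ^ e) * coeff m p := by
  induction p using MvPolynomial.induction_on' with
  | monomial u a =>
    rw [aeval_smul_X_monomial, coeff_monomial, coeff_monomial]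
    split_ifs with h
    · rw [h]
    · rw [mul_zero]
  | add p q hp hq => rw [map_add, coeff_add, coeff_add, hp, hq, mul_add]

end MvPolynomial

section IndexCount

variable {ι κ : Type*} [Fintype ι] [DecidableEq κ]

def indexCount (m : (ι → κ) →₀ ℕ) (i : κ) : ℕ :=
  m.sum fun f e => e * #{s | f s = i}

variable [Fintype κ]

theorem sum_indexCount (m : (ι → κ) →₀ ℕ) :
    ∑ i, indexCount m i = Fintype.card ι * m.degree := by
  have hfiber (f : ι → κ) : ∑ i, #{s | f s = i} = Fintype.card ι := by
    simpa using sum_card_fiberwise_eq_card_filter univ univ f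
  simp only [indexCount, Finsupp.sum, Finsupp.degree_apply]
  rw [sum_comm, mul_sum]
  exact sum_congr rfl fun f _ => by rw [← mul_sum, hfiber, mul_comm]

theorem finsuppProd_prod_pow_eq_prod_pow_indexCount {M : Type*} [CommMonoid M]
    (m : (ι → κ) →₀ ℕ) (v : κ → M) :
    (m.prod fun f e => (∏ s, v (f s)) ^ e) = ∏ i, v i ^ indexCount m i := by
  have hfiber (f : ι → κ) : ∏ s, v (f s) = ∏ i, v i ^ #{s | f s = i} := by
    rw [← prod_fiberwise' univ f v]
    simp only [prod_const]
  simp only [indexCount, Finsupp.sum, Finsupp.prod, hfiber, ← prod_pow, ← pow_mul,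
    ← prod_pow_eq_pow_sum]
  rw [prod_comm]
  exact prod_congr rfl fun i _ => prod_congr rfl fun f _ => by rw [mul_comm]

end IndexCount

theorem slSub_of_coe_eq_diagonal {k N : ℕ} {g : Matrix.SpecialLinearGroup (Fin N) ℂ}
    {v : Fin N → ℂ} (hg : (g : Matrix (Fin N) (Fin N) ℂ) = Matrix.diagonal v) :
    slSub (k := k) g = aeval fun f => (∏ s, v (f s)) • X f := by
  refine congrArg aeval (funext fun f => ?_)
  rw [sum_eq_single f]
  · simp [hg]
  · intro h _ hne
    obtain ⟨s, hs⟩ := Function.ne_iff.mp hne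
    have hzero : (g : Matrix (Fin N) (Fin N) ℂ) (f s) (h s) = 0 := by
      rw [hg, Matrix.diagonal_apply_ne _ (Ne.symm hs)]
    rw [prod_eq_zero (mem_univ s) hzero, zero_smul]
  · simp

theorem exponents_eq_of_prod_pow_eq_one {K κ : Type*} [Field K] [CharZero K] [Fintype κ]
    [DecidableEq κ] {c : κ → ℕ} (hc : ∀ v : κ → K, ∏ i, v i = 1 → ∏ i, v i ^ c i = 1)
    (i j : κ) : c i = c j := by
  rcases eq_or_ne i j with rfl | hij
  · rfl
  let v : κ → K := fun x => if x = i then 2 else if x = j then 2⁻¹ else 1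
  have hv_ne (x : κ) (hx : x ≠ i ∧ x ≠ j) : v x = 1 := by simp [v, hx.1, hx.2]
  have hprod : ∏ x, v x = 1 := by
    rw [prod_eq_mul i j hij (fun x _ => hv_ne x) (by simp) (by simp)]
    simp [v, hij.symm]
  have hpow := hc v hprod
  rw [prod_eq_mul i j hij (fun x _ hx => by rw [hv_ne x hx, one_pow]) (by simp) (by simp)] at hpow
  simp only [v, hij.symm, ↓reduceIte, inv_pow] at hpow
  have h2 : ((2 ^ c i : ℕ) : K) = ((2 ^ c j : ℕ) : K) := by
    push_cast
    exact mul_inv_eq_one₀ (pow_ne_zero _ two_ne_zero) |>.mp hpow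
  exact Nat.pow_right_injective le_rfl (Nat.cast_injective h2)

theorem indexCount_eq_of_slInvariant {k N : ℕ} {p : MvPolynomial (Fin (2 * k) → Fin N) ℂ}
    (hinv : SLInvariant p) {m : (Fin (2 * k) → Fin N) →₀ ℕ} (hm : coeff m p ≠ 0) (i j : Fin N) :
    indexCount m i = indexCount m j := by
  refine exponents_eq_of_prod_pow_eq_one (K := ℂ) (fun v hv => ?_) i j
  let g : Matrix.SpecialLinearGroup (Fin N) ℂ :=
    ⟨Matrix.diagonal v, by rw [Matrix.det_diagonal, hv]⟩
  have hcoeff := congrArg (coeff m) (hinv g)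
  rw [slSub_of_coe_eq_diagonal rfl, coeff_aeval_smul_X,
    finsuppProd_prod_pow_eq_prod_pow_indexCount] at hcoeff
  exact mul_eq_right₀ hm |>.mp hcoeff

theorem dvd_of_slInvariant_of_isHomogeneous {k N d : ℕ}
    {p : MvPolynomial (Fin (2 * k) → Fin N) ℂ} (hinv : SLInvariant p) (hhom : p.IsHomogeneous d)
    (hp : p ≠ 0) : N ∣ 2 * k * d := by
  obtain ⟨m, hm⟩ := ne_zero_iff.mp hp
  have hdeg : m.degree = d := by rw [Finsupp.degree_eq_weight_one]; exact hhom hm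
  have hsum := sum_indexCount m
  rw [Fintype.card_fin, hdeg] at hsum
  rw [← hsum]
  rcases isEmpty_or_nonempty (Fin N) with _ | ⟨⟨i₀⟩⟩
  · simp
  · rw [Fintype.sum_congr _ _ fun i => indexCount_eq_of_slInvariant hinv hm i i₀, sum_const,
      card_univ, Fintype.card_fin, smul_eq_mul]
    exact dvd_mul_right _ _

theorem no_SL_invariants_of_low_degree_general (k n : ℕ) (hk : 1 ≤ k)
    (d : ℕ) (hd0 : 0 < d) (hdn : d < n)
    (p : MvPolynomial (Fin (2 * k) → Fin (2 * k * n)) ℂ)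
    (hinv : SLInvariant p) (hhom : p.IsHomogeneous d) :
    p = 0 := by
  by_contra hp
  have hdvd : n ∣ d :=
    Nat.dvd_of_mul_dvd_mul_left (by omega) (dvd_of_slInvariant_of_isHomogeneous hinv hhom hp)
  exact hd0.ne' (Nat.eq_zero_of_dvd_of_lt hdvd hdn)

/-- For `N = 2kn`, the action of `SL_N(ℂ)` on `⊗^{2k} ℂ^N` has no nonzero homogeneous
invariant polynomials of degree strictly between `0` and `n`. -/
theorem no_SL_invariants_of_low_degree (k n : ℕ) (hk : 1 ≤ k) (hn : 1 ≤ n)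
    (d : ℕ) (hd0 : 0 < d) (hdn : d < n)
    (p : MvPolynomial (Fin (2 * k) → Fin (2 * k * n)) ℂ)
    (hinv : SLInvariant p) (hhom : p.IsHomogeneous d) :
    p = 0 :=
  no_SL_invariants_of_low_degree_general k n hk d hd0 hdn p hinv hhom
end
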